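/- arXiv:0707.1095 — 2 statements merged into one kernel-verified Lean document; each statement's English description precedes it below -/
import Mathlib

section
/- Let D be a digraph such that for every pair R, Q of distinct strong components of D, if there is an arc from R to Q then every vertex of Q has an in-neighbor in R. Then either D has no out-branching, or the maximum number of leaves over all out-branchings of D equals the maximum number of leaves over all out-trees of D. -/
open Relation

/-- `T` is an out-branching (spanning out-tree) of the digraph `A` rooted at `r`. -/
def IsOutBranching {V : Type*} (A : V → V → Prop) (r : V) (T : V → V → Prop) : Prop :=
  (∀ u v, T u v → A u v) ∧
  (∀ u, ¬ T u r) ∧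
  (∀ v, v ≠ r → ∃! u, T u v) ∧
  (∀ v, Relation.ReflTransGen T r v)

/-- Number of leaves (out-degree zero vertices) of a spanning tree relation `T`. -/
noncomputable def leavesCount {V : Type*} (T : V → V → Prop) : ℕ :=
  {v : V | ∀ u, ¬ T v u}.ncard

/-- `T` is an out-tree of digraph `A` on vertex set `S`, rooted at `r`. -/
def IsOutTree {V : Type*} (A : V → V → Prop) (S : Set V) (r : V) (T : V → V → Prop) : Prop :=
  r ∈ S ∧
  (∀ u v, T u v → A u v ∧ u ∈ S ∧ v ∈ S) ∧
  (∀ u, ¬ T u r) ∧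
  (∀ v ∈ S, v ≠ r → ∃! u, T u v) ∧
  (∀ v ∈ S, Relation.ReflTransGen T r v)

/-- Number of leaves of an out-tree with vertex set `S` and arc relation `T`. -/
noncomputable def treeLeaves {V : Type*} (S : Set V) (T : V → V → Prop) : ℕ :=
  {v : V | v ∈ S ∧ ∀ u, ¬ T v u}.ncard

/-- A rooted (directed) tree on the whole vertex type. -/
def IsRootedTree {V : Type*} (T : V → V → Prop) (r : V) : Prop :=
  (∀ u, ¬ T u r) ∧
  (∀ v, v ≠ r → ∃! u, T u v) ∧
  (∀ v, Relation.ReflTransGen T r v)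

/-- Out-degree of a vertex in a digraph/tree relation. -/
noncomputable def outDeg {V : Type*} (T : V → V → Prop) (v : V) : ℕ :=
  {u : V | T v u}.ncard

/-- The underlying undirected simple graph of a digraph. -/
def UN {V : Type*} (A : V → V → Prop) : SimpleGraph V where
  Adj u v := u ≠ v ∧ (A u v ∨ A v u)
  symm := ⟨fun u v h => ⟨Ne.symm h.1, h.2.symm⟩⟩
  loopless := ⟨fun v h => h.1 rfl⟩

/-- The pathwidth of `G` is at most `w`: there is a path decomposition of width `≤ w`. -/
def pwLE {V : Type*} (G : SimpleGraph V) (w : ℕ) : Prop :=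
  ∃ (s : ℕ) (X : Fin s → Finset V),
    (∀ v, ∃ i, v ∈ X i) ∧
    (∀ u v, G.Adj u v → ∃ i, u ∈ X i ∧ v ∈ X i) ∧
    (∀ i j k : Fin s, i ≤ j → j ≤ k → ∀ v, v ∈ X i → v ∈ X k → v ∈ X j) ∧
    (∀ i, (X i).card ≤ w + 1)

/-- The strong component of the vertex `v` in digraph `A`. -/
def strongComp {V : Type*} (A : V → V → Prop) (v : V) : Set V :=
  {u : V | Relation.ReflTransGen A u v ∧ Relation.ReflTransGen A v u}

/-- Maximum number of leaves over all out-trees of `A` (ℓ(D)). -/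
noncomputable def maxLeafOT {V : Type*} (A : V → V → Prop) : ℕ :=
  sSup {l : ℕ | ∃ (S : Set V) (r : V) (T : V → V → Prop), IsOutTree A S r T ∧ treeLeaves S T = l}

/-- Maximum number of leaves over all out-branchings of `A` (ℓ_s(D)), `0` if none exists. -/
noncomputable def maxLeafOB {V : Type*} (A : V → V → Prop) : ℕ :=
  sSup {l : ℕ | ∃ (r : V) (T : V → V → Prop), IsOutBranching A r T ∧ leavesCount T = l}

/-- `T` is a 1-arc-exchange optimal out-branching of `A` rooted at `r`. -/
def OneAEOptimal {V : Type*} (A : V → V → Prop) (r : V) (T : V → V → Prop) : Prop :=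
  IsOutBranching A r T ∧
  ∀ f x : V × V, T f.1 f.2 → A x.1 x.2 → ¬ T x.1 x.2 →
    IsOutBranching A r (fun a b => (T a b ∧ (a, b) ≠ f) ∨ (a, b) = x) →
    leavesCount (fun a b => (T a b ∧ (a, b) ≠ f) ∨ (a, b) = x) ≤ leavesCount T

/-- Vertex separation of `G` is at most `k`, witnessed by some linear ordering. -/
def vsLE {V : Type*} [Fintype V] (G : SimpleGraph V) (k : ℕ) : Prop :=
  ∃ σ : Fin (Fintype.card V) ≃ V,
    ∀ j : Fin (Fintype.card V),
      {i : Fin (Fintype.card V) | i ≤ j ∧ ∃ i', j < i' ∧ G.Adj (σ i) (σ i')}.ncard ≤ k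

/-!
An out-tree that misses some vertex can always be enlarged without losing leaves. If an arc
leaves its vertex set, hang the head of that arc on the tree as a new leaf: at most one old
leaf (the tail) is lost and one is gained. Otherwise the vertex set is closed under
reachability, so the root `r₀` of an out-branching of `D` lies outside and the tree's root
`r` does not reach `r₀`. A walk from `r₀` to `r` then enters the strong component of `r`
through an arc from a strong component that `r` does not reach, and the hypothesis gives an
in-neighbour `u` of `r` in that component; `u` is not in the tree, so `u → r` re-roots the
tree at `u` without touching its leaves. Iterating yields an out-branching with at least as
many leaves, so `ℓ(D) ≤ ℓ_s(D)`; the reverse inequality holds since out-branchings are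
out-trees.
-/

def StrongCompInComplete {V : Type*} (A : V → V → Prop) : Prop :=
  ∀ v w : V, strongComp A v ≠ strongComp A w →
    (∃ a ∈ strongComp A v, ∃ b ∈ strongComp A w, A a b) →
    ∀ q ∈ strongComp A w, ∃ a ∈ strongComp A v, A a q

section OutTree

variable {V : Type*} {A T : V → V → Prop} {S : Set V} {r : V}

theorem mem_strongComp_self (A : V → V → Prop) (v : V) : v ∈ strongComp A v :=
  ⟨.refl, .refl⟩

theorem IsOutBranching.isOutTree_univ (hT : IsOutBranching A r T) :
    IsOutTree A Set.univ r T :=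
  ⟨trivial, fun u v huv => ⟨hT.1 u v huv, trivial, trivial⟩, hT.2.1,
    fun v _ hv => hT.2.2.1 v hv, fun v _ => hT.2.2.2 v⟩

theorem IsOutTree.isOutBranching_of_univ (hT : IsOutTree A Set.univ r T) :
    IsOutBranching A r T :=
  ⟨fun u v huv => (hT.2.1 u v huv).1, hT.2.2.1,
    fun v hv => hT.2.2.2.1 v trivial hv, fun v => hT.2.2.2.2 v trivial⟩

theorem treeLeaves_univ (T : V → V → Prop) : treeLeaves Set.univ T = leavesCount T := by
  simp [treeLeaves, leavesCount]

theorem treeLeaves_le_card [Finite V] (S : Set V) (T : V → V → Prop) :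
    treeLeaves S T ≤ Nat.card V :=
  Set.ncard_le_card _

theorem IsOutTree.reachable (hT : IsOutTree A S r T) {v : V} (hv : v ∈ S) :
    ReflTransGen A r v :=
  ReflTransGen.mono (fun a b hab => (hT.2.1 a b hab).1) _ _ (hT.2.2.2.2 v hv)

theorem IsOutTree.insert_leaf (hT : IsOutTree A S r T) {u v : V} (hu : u ∈ S) (hv : v ∉ S)
    (huv : A u v) :
    IsOutTree A (insert v S) r (fun a b => T a b ∨ a = u ∧ b = v) := by
  obtain ⟨hr, harc, hroot, hparent, hreach⟩ := hT
  have hlift : ∀ w ∈ S, ReflTransGen (fun a b => T a b ∨ a = u ∧ b = v) r w :=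
    fun w hw => ReflTransGen.mono (fun _ _ => Or.inl) _ _ (hreach w hw)
  refine ⟨Set.mem_insert_of_mem _ hr, ?_, ?_, ?_, ?_⟩
  · rintro a b (hab | ⟨rfl, rfl⟩)
    · obtain ⟨hA, ha, hb⟩ := harc a b hab
      exact ⟨hA, Set.mem_insert_of_mem _ ha, Set.mem_insert_of_mem _ hb⟩
    · exact ⟨huv, Set.mem_insert_of_mem _ hu, Set.mem_insert _ _⟩
  · rintro a (ha | ⟨-, rfl⟩)
    · exact hroot a ha
    · exact hv hr
  · rintro w hw hwr
    rcases Set.mem_insert_iff.mp hw with rfl | hwS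
    · refine ⟨u, Or.inr ⟨rfl, rfl⟩, ?_⟩
      rintro y (hy | ⟨rfl, -⟩)
      · exact absurd (harc y w hy).2.2 hv
      · rfl
    · obtain ⟨p, hp, hpu⟩ := hparent w hwS hwr
      refine ⟨p, Or.inl hp, ?_⟩
      rintro y (hy | ⟨-, rfl⟩)
      · exact hpu y hy
      · exact absurd hwS hv
  · rintro w hw
    rcases Set.mem_insert_iff.mp hw with rfl | hwS
    · exact (hlift u hu).tail (Or.inr ⟨rfl, rfl⟩)
    · exact hlift w hwS

theorem IsOutTree.treeLeaves_le_insert_leaf [Finite V] (hT : IsOutTree A S r T) {u v : V}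
    (hu : u ∈ S) (hv : v ∉ S) :
    treeLeaves S T ≤ treeLeaves (insert v S) (fun a b => T a b ∨ a = u ∧ b = v) := by
  set L := {w : V | w ∈ S ∧ ∀ x, ¬ T w x}
  have hsub : insert v (L \ {u}) ⊆
      {w | w ∈ insert v S ∧ ∀ x, ¬ (T w x ∨ w = u ∧ x = v)} := by
    rintro w (rfl | ⟨⟨hwS, hwleaf⟩, hwu⟩)
    · refine ⟨Set.mem_insert _ _, ?_⟩
      rintro x (hx | ⟨rfl, -⟩)
      · exact hv (hT.2.1 _ _ hx).2.1
      · exact hv hu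
    · refine ⟨Set.mem_insert_of_mem _ hwS, ?_⟩
      rintro x (hx | ⟨rfl, -⟩)
      · exact hwleaf x hx
      · exact hwu rfl
  have hv' : v ∉ L \ {u} := fun h => hv h.1.1
  calc treeLeaves S T = L.ncard := rfl
    _ ≤ (L \ {u}).ncard + 1 := by have := Set.pred_ncard_le_ncard_sdiff_singleton L u; omega
    _ = (insert v (L \ {u})).ncard := (Set.ncard_insert_of_notMem hv').symm
    _ ≤ _ := Set.ncard_le_ncard hsub

theorem IsOutTree.insert_root (hT : IsOutTree A S r T) {u : V} (hu : u ∉ S) (hur : A u r) :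
    IsOutTree A (insert u S) u (fun a b => T a b ∨ a = u ∧ b = r) := by
  obtain ⟨hr, harc, hroot, hparent, hreach⟩ := hT
  refine ⟨Set.mem_insert _ _, ?_, ?_, ?_, ?_⟩
  · rintro a b (hab | ⟨rfl, rfl⟩)
    · obtain ⟨hA, ha, hb⟩ := harc a b hab
      exact ⟨hA, Set.mem_insert_of_mem _ ha, Set.mem_insert_of_mem _ hb⟩
    · exact ⟨hur, Set.mem_insert _ _, Set.mem_insert_of_mem _ hr⟩
  · rintro a (ha | ⟨-, rfl⟩)
    · exact hu (harc a u ha).2.2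
    · exact hu hr
  · rintro w hw hwu
    have hwS : w ∈ S := (Set.mem_insert_iff.mp hw).resolve_left hwu
    by_cases hwr : w = r
    · subst hwr
      refine ⟨u, Or.inr ⟨rfl, rfl⟩, ?_⟩
      rintro y (hy | ⟨rfl, -⟩)
      · exact absurd hy (hroot y)
      · rfl
    · obtain ⟨p, hp, hpu⟩ := hparent w hwS hwr
      refine ⟨p, Or.inl hp, ?_⟩
      rintro y (hy | ⟨-, rfl⟩)
      · exact hpu y hy
      · exact absurd rfl hwr
  · rintro w hw
    rcases Set.mem_insert_iff.mp hw with rfl | hwS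
    · exact .refl
    · exact .head (Or.inr ⟨rfl, rfl⟩)
        (ReflTransGen.mono (fun _ _ => Or.inl) _ _ (hreach w hwS))

theorem treeLeaves_le_insert_root [Finite V] {u : V} (hu : u ∉ S) :
    treeLeaves S T ≤ treeLeaves (insert u S) (fun a b => T a b ∨ a = u ∧ b = r) := by
  refine Set.ncard_le_ncard ?_
  rintro w ⟨hwS, hwleaf⟩
  refine ⟨Set.mem_insert_of_mem _ hwS, ?_⟩
  rintro x (hx | ⟨rfl, -⟩)
  · exact hwleaf x hx
  · exact hu hwS

theorem exists_arc_into_strongComp {a : V} (har : ReflTransGen A a r)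
    (hra : ¬ ReflTransGen A r a) :
    ∃ x y, A x y ∧ y ∈ strongComp A r ∧ ¬ ReflTransGen A r x := by
  induction har using ReflTransGen.head_induction_on with
  | refl => exact absurd .refl hra
  | @head a c hac hcr ih =>
    by_cases hrc : ReflTransGen A r c
    · exact ⟨a, c, hac, ⟨hcr, hrc⟩, hra⟩
    · exact ih hrc

theorem StrongCompInComplete.exists_inNeighbor (hD : StrongCompInComplete A) {a : V}
    (har : ReflTransGen A a r) (hra : ¬ ReflTransGen A r a) :
    ∃ u, A u r ∧ ¬ ReflTransGen A r u := by
  obtain ⟨x, y, hxy, hy, hrx⟩ := exists_arc_into_strongComp har hra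
  have hxr : strongComp A x ≠ strongComp A r := fun heq =>
    hrx (heq ▸ mem_strongComp_self A x).2
  obtain ⟨u, hu, hur⟩ := hD x r hxr ⟨x, mem_strongComp_self A x, y, hy, hxy⟩ r
    (mem_strongComp_self A r)
  exact ⟨u, hur, fun hru => hrx (hru.trans hu.1)⟩

theorem IsOutTree.exists_ssuperset [Finite V] (hD : StrongCompInComplete A) {r₀ : V}
    (hr₀ : ∀ v, ReflTransGen A r₀ v) (hT : IsOutTree A S r T) (hS : S ≠ Set.univ) :
    ∃ S' r' T', IsOutTree A S' r' T' ∧ S ⊂ S' ∧ treeLeaves S T ≤ treeLeaves S' T' := by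
  by_cases hout : ∃ u ∈ S, ∃ v ∉ S, A u v
  · obtain ⟨u, hu, v, hv, huv⟩ := hout
    exact ⟨_, _, _, hT.insert_leaf hu hv huv, Set.ssubset_insert hv,
      hT.treeLeaves_le_insert_leaf hu hv⟩
  push Not at hout
  have hclosed : ∀ v, ReflTransGen A r v → v ∈ S := by
    intro v hv
    induction hv with
    | refl => exact hT.1
    | tail _ hbc ih => exact not_not.mp fun hc => hout _ ih _ hc hbc
  obtain ⟨w, hw⟩ := (Set.ne_univ_iff_exists_notMem S).mp hS
  have hrr₀ : ¬ ReflTransGen A r r₀ := fun h => hw (hclosed w (h.trans (hr₀ w)))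
  obtain ⟨u, hur, hru⟩ := hD.exists_inNeighbor (hr₀ r) hrr₀
  have hu : u ∉ S := fun hu => hru (hT.reachable hu)
  exact ⟨_, _, _, hT.insert_root hu hur, Set.ssubset_insert hu, treeLeaves_le_insert_root hu⟩

theorem IsOutTree.exists_outBranching_le [Finite V] (hD : StrongCompInComplete A) {r₀ : V}
    (hr₀ : ∀ v, ReflTransGen A r₀ v) (hT : IsOutTree A S r T) :
    ∃ r' T', IsOutBranching A r' T' ∧ treeLeaves S T ≤ leavesCount T' := by
  induction S using WellFoundedGT.induction generalizing r T with
  | _ S ih =>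
    by_cases hS : S = Set.univ
    · subst hS
      exact ⟨r, T, hT.isOutBranching_of_univ, (treeLeaves_univ T).le⟩
    obtain ⟨S', r', T', hT', hSS', hle⟩ := hT.exists_ssuperset hD hr₀ hS
    obtain ⟨r'', T'', hB, hle'⟩ := ih S' hSS' hT'
    exact ⟨r'', T'', hB, hle.trans hle'⟩

end OutTree

/-- If whenever there is an arc from a strong component `R` to a distinct strong component `Q`,
every vertex of `Q` has an in-neighbor in `R`, then either `D` has no out-branching, or the
maximum leaf numbers over out-branchings and over out-trees coincide. -/
theorem stmt_12 {V : Type*} [Fintype V] (A : V → V → Prop)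
    (h : ∀ v w : V, strongComp A v ≠ strongComp A w →
      (∃ a ∈ strongComp A v, ∃ b ∈ strongComp A w, A a b) →
      ∀ q ∈ strongComp A w, ∃ a ∈ strongComp A v, A a q) :
    (¬ ∃ (r : V) (T : V → V → Prop), IsOutBranching A r T) ∨
      maxLeafOT A = maxLeafOB A := by
  refine or_iff_not_imp_left.mpr fun hOB => ?_
  obtain ⟨r₀, T₀, hT₀⟩ := not_not.mp hOB
  have hsub : {l | ∃ r T, IsOutBranching A r T ∧ leavesCount T = l} ⊆
      {l | ∃ S r T, IsOutTree A S r T ∧ treeLeaves S T = l} := by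
    rintro _ ⟨r, T, hT, rfl⟩
    exact ⟨_, r, T, hT.isOutTree_univ, treeLeaves_univ T⟩
  have hbdd : BddAbove {l | ∃ S r T, IsOutTree A S r T ∧ treeLeaves S T = l} := by
    refine ⟨Nat.card V, ?_⟩
    rintro _ ⟨S, r, T, -, rfl⟩
    exact treeLeaves_le_card S T
  have hne : {l | ∃ r T, IsOutBranching A r T ∧ leavesCount T = l}.Nonempty :=
    ⟨_, r₀, T₀, hT₀, rfl⟩
  refine le_antisymm (csSup_le (hne.mono hsub) ?_) (csSup_le_csSup hbdd hne hsub)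
  rintro _ ⟨S, r, T, hT, rfl⟩
  obtain ⟨r', T', hB, hle⟩ :=
    hT.exists_outBranching_le h fun v => hT₀.isOutTree_univ.reachable (Set.mem_univ v)
  exact hle.trans (le_csSup (hbdd.mono hsub) ⟨r', T', hB, rfl⟩)
end

section
/- Let T be a 1-arc-exchange optimal out-branching of a digraph D rooted at r. Then there is no arc (u,v) ∈ A(D) \ A(T) such that u and v are non-leaves of T lying on a common directed path from r in T, u is strictly closer to r than v, and the parent of v has out-degree 1 in T. -/
open Relation

/-!
Reattach `v` to `u`: replace the tree arc `(p, v)` by `(u, v)`. Since `u` is not below `v`, this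
is again an out-branching. No vertex loses its leaf status (`u` keeps its other children), while
`p`, whose only child was `v`, becomes a new leaf, contradicting 1-arc-exchange optimality.
-/

section

variable {V : Type*} {T : V → V → Prop} {r : V}

def arcExchange (T : V → V → Prop) (f x : V × V) : V → V → Prop :=
  fun a b => (T a b ∧ (a, b) ≠ f) ∨ (a, b) = x

theorem arcExchange_le {A : V → V → Prop} {f : V × V} {a b : V} (hTA : T ≤ A)
    (hA : A a b) : arcExchange T f (a, b) ≤ A := by
  rintro c d (⟨hcd, -⟩ | hcd)
  · exact hTA c d hcd
  · obtain ⟨rfl, rfl⟩ := Prod.ext_iff.mp hcd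
    exact hA

theorem IsOutBranching.isRootedTree {A : V → V → Prop} (h : IsOutBranching A r T) :
    IsRootedTree T r :=
  h.2

theorem eq_of_outDeg_eq_one {p v w : V} (hdeg : outDeg T p = 1) (hv : T p v) (hw : T p w) :
    w = v := by
  obtain ⟨a, ha⟩ := Set.ncard_eq_one.mp hdeg
  have hv' : v ∈ {u | T p u} := hv
  have hw' : w ∈ {u | T p u} := hw
  rw [ha, Set.mem_singleton_iff] at hv' hw'
  rw [hv', hw']

namespace IsRootedTree

theorem isOutBranching {A : V → V → Prop} (hT : IsRootedTree T r) (hA : T ≤ A) :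
    IsOutBranching A r T :=
  ⟨hA, hT⟩

theorem ne_root {a v : V} (hT : IsRootedTree T r) (h : T a v) : v ≠ r := by
  rintro rfl
  exact hT.1 a h

theorem parent_eq {a b v : V} (hT : IsRootedTree T r) (ha : T a v) (hb : T b v) : a = b :=
  (hT.2.1 v (hT.ne_root ha)).unique ha hb

theorem not_transGen_self (hT : IsRootedTree T r) (v : V) : ¬ TransGen T v v := by
  induction hT.2.2 v with
  | refl =>
    intro h
    obtain ⟨z, _, hz⟩ := TransGen.tail'_iff.mp h
    exact hT.1 z hz
  | tail _ hbc ih =>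
    intro h
    obtain ⟨z, hcz, hzc⟩ := TransGen.tail'_iff.mp h
    exact ih (TransGen.head' hbc (hT.parent_eq hzc hbc ▸ hcz))

theorem reflTransGen_arcExchange_of_not_reflTransGen (hT : IsRootedTree T r) {p v w : V}
    (x : V × V) (hvw : ¬ ReflTransGen T v w) : ReflTransGen (arcExchange T (p, v) x) r w := by
  induction hT.2.2 w with
  | refl => exact ReflTransGen.refl
  | @tail b c _ hbc ih =>
    have hbc' : (b, c) ≠ (p, v) := by
      rintro ⟨-, rfl⟩
      exact hvw ReflTransGen.refl
    exact (ih fun h => hvw (h.tail hbc)).tail (Or.inl ⟨hbc, hbc'⟩)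

theorem arcExchange_of_not_reflTransGen {p u v : V} (hT : IsRootedTree T r) (hpv : T p v)
    (hvu : ¬ ReflTransGen T v u) : IsRootedTree (arcExchange T (p, v) (u, v)) r := by
  have hvr := hT.ne_root hpv
  refine ⟨?root, ?parent, ?reach⟩
  case root =>
    rintro a (⟨ha, -⟩ | hav)
    · exact hT.1 a ha
    · exact hvr (Prod.ext_iff.mp hav).2.symm
  case parent =>
    intro w hw
    by_cases hwv : w = v
    · subst hwv
      refine ⟨u, Or.inr rfl, ?_⟩
      rintro z (⟨hz, hzp⟩ | ⟨rfl, -⟩)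
      · exact absurd (by rw [hT.parent_eq hz hpv]) hzp
      · rfl
    · obtain ⟨q, hq, huniq⟩ := hT.2.1 w hw
      refine ⟨q, Or.inl ⟨hq, fun h => hwv (Prod.ext_iff.mp h).2⟩, ?_⟩
      rintro z (⟨hz, -⟩ | ⟨-, rfl⟩)
      · exact huniq z hz
      · exact absurd rfl hwv
  case reach =>
    have hrv : ReflTransGen (arcExchange T (p, v) (u, v)) r v :=
      (hT.reflTransGen_arcExchange_of_not_reflTransGen (u, v) hvu).tail (Or.inr rfl)
    intro w
    induction hT.2.2 w with
    | refl => exact ReflTransGen.refl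
    | @tail b c _ hbc ih =>
      by_cases hbc' : (b, c) = (p, v)
      · obtain ⟨-, rfl⟩ := Prod.ext_iff.mp hbc'
        exact hrv
      · exact ih.tail (Or.inl ⟨hbc, hbc'⟩)

end IsRootedTree

theorem leavesCount_lt_arcExchange [Finite V] {p u v : V} (hu : ∃ x, T u x) (hpu : p ≠ u)
    (hpv : T p v) (hp : ∀ w, T p w → w = v) :
    leavesCount T < leavesCount (arcExchange T (p, v) (u, v)) := by
  obtain ⟨c, huc⟩ := hu
  have hsub : {w | ∀ z, ¬ T w z} ⊆ {w | ∀ z, ¬ arcExchange T (p, v) (u, v) w z} := by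
    rintro w hw z (⟨hz, -⟩ | ⟨rfl, -⟩)
    · exact hw z hz
    · exact hw c huc
  have hp_leaf : p ∈ {w | ∀ z, ¬ arcExchange T (p, v) (u, v) w z} := by
    rintro z (⟨hz, hzv⟩ | ⟨rfl, -⟩)
    · exact hzv (by rw [hp z hz])
    · exact hpu rfl
  exact Set.ncard_lt_ncard ⟨hsub, fun h => h hp_leaf v hpv⟩ (Set.toFinite _)

end

/-- In a 1-arc-exchange optimal out-branching, there is no non-tree arc `(u,v)` where `u` and
`v` are non-leaves on a common path from the root, `u` strictly closer to the root, and the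
parent of `v` has out-degree 1. -/
theorem stmt_16 {V : Type*} [Fintype V] (A : V → V → Prop) (r : V) (T : V → V → Prop)
    (hopt : OneAEOptimal A r T) :
    ∀ u v : V, A u v → ¬ T u v → (∃ x, T u x) → (∃ x, T v x) →
      Relation.TransGen T u v →
      (∃ p, T p v ∧ outDeg T p = 1) → False := by
  rintro u v hA hnT hu - huv ⟨p, hpv, hdeg⟩
  obtain ⟨hOB, hswap⟩ := hopt
  have hT := hOB.isRootedTree
  have hvu : ¬ ReflTransGen T v u := fun h => hT.not_transGen_self u (huv.trans_left h)
  have hpu : p ≠ u := by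
    rintro rfl
    exact hnT hpv
  have hT' : IsOutBranching A r (arcExchange T (p, v) (u, v)) :=
    (hT.arcExchange_of_not_reflTransGen hpv hvu).isOutBranching (arcExchange_le hOB.1 hA)
  exact (leavesCount_lt_arcExchange hu hpu hpv fun w hw => eq_of_outDeg_eq_one hdeg hpv hw).not_ge
    (hswap (p, v) (u, v) hpv hA hnT hT')
end
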